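/- arXiv:1212.5008 — 2 statements merged into one kernel-verified Lean document; each statement's English description precedes it below -/
import Mathlib

section
/- Let G_1 and G_2 be finite simple graphs with distinguished vertices u ∈ V(G_1) and v ∈ V(G_2), and let G = G_1|u : G_2|v be the graph obtained from the disjoint union of G_1 and G_2 by adding the edge uv. Then Q_G(x) = Q_{G_1}(x) Q_{G_2}(x) − Q_{G_1}(x) Q_{G_2|v}(x) − Q_{G_2}(x) Q_{G_1|u}(x). -/
open Polynomial SimpleGraph Matrix

open scoped Classical

/-- The signless Laplacian matrix `Q(G) = D(G) + A(G)` of a simple graph, over `ℝ`. -/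
noncomputable def sLap {V : Type*} [Fintype V] (G : SimpleGraph V) : Matrix V V ℝ :=
  Matrix.of fun x y =>
    (if x = y then ((G.neighborSet x).ncard : ℝ) else 0) + (if G.Adj x y then 1 else 0)

/-- The signless Laplacian characteristic polynomial `Q_G(x) = det (xI - Q(G))`. -/
noncomputable def QPoly {V : Type*} [Fintype V] [DecidableEq V] (G : SimpleGraph V) :
    Polynomial ℝ :=
  (sLap G).charpoly

/-- The signless Laplacian coefficients `φ_i(G)`, defined by
`det(xI − Q(G)) = Σ_{i=0}^n (−1)^i φ_i(G) x^{n−i}`. -/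
noncomputable def phi {V : Type*} [Fintype V] [DecidableEq V] (G : SimpleGraph V) (i : ℕ) : ℝ :=
  (-1 : ℝ) ^ i * (QPoly G).coeff (Fintype.card V - i)

/-- A unicyclic graph: connected with as many edges as vertices. -/
def IsUnicyclic {V : Type*} [Fintype V] (G : SimpleGraph V) : Prop :=
  G.Connected ∧ G.edgeSet.ncard = Fintype.card V

/-- A vertex lies on (the unique) cycle of `G`. -/
def OnCycle {V : Type*} (G : SimpleGraph V) (x : V) : Prop :=
  ∃ (y : V) (p : G.Walk y y), p.IsCycle ∧ x ∈ p.support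

/-- The (unique) cycle of `G` has odd length. -/
def HasOddCycle {V : Type*} (G : SimpleGraph V) : Prop :=
  ∃ (x : V) (p : G.Walk x x), p.IsCycle ∧ Odd p.length

/-- The (unique) cycle of `G` has even length. -/
def HasEvenCycle {V : Type*} (G : SimpleGraph V) : Prop :=
  ∃ (x : V) (p : G.Walk x x), p.IsCycle ∧ Even p.length

/-- `M` is a matching of `G`: a set of edges of `G`, pairwise sharing no vertex. -/
def IsMatchingFinset {V : Type*} (G : SimpleGraph V) (M : Finset (Sym2 V)) : Prop :=
  (∀ e ∈ M, e ∈ G.edgeSet) ∧ ∀ e ∈ M, ∀ f ∈ M, e ≠ f → ∀ x : V, x ∈ e → x ∉ f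

/-- `G` has matching number `m`. -/
def HasMatchingNumber {V : Type*} (G : SimpleGraph V) (m : ℕ) : Prop :=
  (∃ M : Finset (Sym2 V), IsMatchingFinset G M ∧ M.card = m) ∧
    ∀ M : Finset (Sym2 V), IsMatchingFinset G M → M.card ≤ m

/-- Every tree attached to the cycle of `G` is a pendent path of length at most 2
attached at a cycle vertex: every vertex off the cycle is either a pendent vertex
attached to a cycle vertex, the middle vertex of a pendent path of length 2 attached
at a cycle vertex, or the end vertex of such a path. -/
def PendantPathsOnly {V : Type*} (G : SimpleGraph V) : Prop :=
  ∀ x : V, ¬ OnCycle G x →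
    ((G.neighborSet x).ncard = 1 ∧ ∃ c, G.Adj x c ∧ OnCycle G c) ∨
    ((G.neighborSet x).ncard = 2 ∧
      ∃ c y, G.Adj x c ∧ OnCycle G c ∧ G.Adj x y ∧ (G.neighborSet y).ncard = 1) ∨
    ((G.neighborSet x).ncard = 1 ∧
      ∃ y c, G.Adj x y ∧ (G.neighborSet y).ncard = 2 ∧ G.Adj y c ∧ OnCycle G c)

/-- Vertex type of the unicyclic graph `G_g(s₁,t₁;…;s_g,t_g)`: the cycle vertices, the
vertices of the pendent paths of length 2, and the pendent vertices. -/
abbrev GgV (g : ℕ) (s t : Fin g → ℕ) : Type :=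
  Fin g ⊕ ((Σ i : Fin g, Fin (s i) × Fin 2) ⊕ (Σ i : Fin g, Fin (t i)))

/-- The unicyclic graph `G_g(s₁,t₁;…;s_g,t_g)` obtained from a cycle `u_1 … u_g u_1` by
attaching `s i` pendent paths of length 2 and `t i` pendent edges at the vertex `u i`. -/
def Gg (g : ℕ) [NeZero g] (s t : Fin g → ℕ) : SimpleGraph (GgV g s t) :=
  SimpleGraph.fromRel fun x y =>
    match x, y with
    | Sum.inl i, Sum.inl j => j = i + 1
    | Sum.inl i, Sum.inr (Sum.inl a) => a.1 = i ∧ a.2.2 = 0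
    | Sum.inr (Sum.inl a), Sum.inr (Sum.inl b) => a.2.2 = 0 ∧ b = ⟨a.1, (a.2.1, 1)⟩
    | Sum.inl i, Sum.inr (Sum.inr b) => b.1 = i
    | _, _ => False

/-- `Q_{G|v}(x)`: the characteristic polynomial of the principal submatrix of `Q(G)`
obtained by deleting the row and column corresponding to the vertex `v`. -/
noncomputable def QPolyDel {V : Type*} [Fintype V] [DecidableEq V] (G : SimpleGraph V)
    (v : V) : Polynomial ℝ :=
  ((sLap G).submatrix (fun x : {x : V // x ≠ v} => (x : V))
    (fun x : {x : V // x ≠ v} => (x : V))).charpoly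

/-- The graph `G_1|u : G_2|v`, obtained from the disjoint union of `G₁` and `G₂` by joining
the vertex `u` of `G₁` to the vertex `v` of `G₂` by an edge. -/
def joinByEdge {V₁ V₂ : Type*} (G₁ : SimpleGraph V₁) (G₂ : SimpleGraph V₂) (u : V₁)
    (v : V₂) : SimpleGraph (V₁ ⊕ V₂) :=
  SimpleGraph.fromRel fun x y =>
    match x, y with
    | Sum.inl a, Sum.inl b => G₁.Adj a b
    | Sum.inr a, Sum.inr b => G₂.Adj a b
    | Sum.inl a, Sum.inr b => a = u ∧ b = v
    | _, _ => False

/-!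
`Q(G)` is the block-diagonal matrix `Q(G₁) ⊕ Q(G₂)` plus the rank-one matrix `w wᵀ`, where
`w = e_u + e_v`. The matrix determinant lemma `det (A - w wᵀ) = det A - wᵀ adj(A) w`, applied to
`A = xI - Q(G₁) ⊕ Q(G₂) = A₁ ⊕ A₂`, reduces the claim to the four entries of `adj(A)` at `u, v`.
Since `adj(A₁ ⊕ A₂) = det(A₂) adj(A₁) ⊕ det(A₁) adj(A₂)`, the mixed entries vanish, and a
diagonal entry of `adj(xI - M)` is the characteristic polynomial of the principal submatrix of
`M`, which gives `wᵀ adj(A) w = Q_{G₂} Q_{G₁|u} + Q_{G₁} Q_{G₂|v}`.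
-/

namespace Matrix

variable {n R : Type*} [Fintype n] [DecidableEq n] [CommRing R]

theorem det_add_vecMulVec_of_isUnit {A : Matrix n n R} (hA : IsUnit A.det) (u v : n → R) :
    (A + vecMulVec u v).det = A.det + v ⬝ᵥ A.adjugate *ᵥ u := by
  rw [vecMulVec_eq Unit, det_add_replicateCol_mul_replicateRow hA, det_unique (1 + _),
    nonsing_inv_apply _ hA, Matrix.mul_smul, Matrix.smul_mul, ← replicateRow_vecMul]
  simp only [add_apply, one_apply_eq, smul_apply, replicateRow_mul_replicateCol_apply,
    dotProduct_mulVec, smul_eq_mul]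
  linear_combination (v ᵥ* A.adjugate ⬝ᵥ u) * hA.mul_val_inv

theorem det_add_vecMulVec [IsDomain R] {A : Matrix n n R} (hA : A.det ≠ 0) (u v : n → R) :
    (A + vecMulVec u v).det = A.det + v ⬝ᵥ A.adjugate *ᵥ u := by
  let f := algebraMap R (FractionRing R)
  have hf : Function.Injective f := IsFractionRing.injective R _
  apply hf
  have hfA : IsUnit (f.mapMatrix A).det := by
    rw [← RingHom.map_det, isUnit_iff_ne_zero]
    exact (map_ne_zero_iff f hf).mpr hA
  have hmap : f.mapMatrix (vecMulVec u v) = vecMulVec (f ∘ u) (f ∘ v) := by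
    ext i j
    simp [vecMulVec]
  rw [RingHom.map_det, map_add, hmap, det_add_vecMulVec_of_isUnit hfA, map_add, RingHom.map_det,
    RingHom.map_dotProduct, ← RingHom.map_adjugate]
  congr 2
  ext i
  exact (RingHom.map_mulVec f _ _ i).symm

theorem charpoly_add_vecMulVec [IsDomain R] (M : Matrix n n R) (u v : n → R) :
    (M + vecMulVec u v).charpoly = M.charpoly - (C ∘ v) ⬝ᵥ M.charmatrix.adjugate *ᵥ (C ∘ u) := by
  have h : (M + vecMulVec u v).charmatrix = M.charmatrix + vecMulVec (-(C ∘ u)) (C ∘ v) := by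
    ext i j : 1
    simp [charmatrix, vecMulVec]
    ring
  rw [charpoly, h, det_add_vecMulVec M.charpoly_monic.ne_zero, mulVec_neg, dotProduct_neg,
    ← sub_eq_add_neg, charpoly]

theorem adjugate_apply_self (A : Matrix n n R) (i : n) :
    A.adjugate i i = (A.submatrix (↑) (↑) : Matrix {j // j ≠ i} {j // j ≠ i} R).det := by
  have : Unique {j // ¬j ≠ i} := ⟨⟨⟨i, not_not.2 rfl⟩⟩, fun j => Subtype.ext (not_not.1 j.2)⟩
  have hdefault : ((default : {j // ¬j ≠ i}) : n) = i := not_not.1 (default : {j // ¬j ≠ i}).2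
  rw [adjugate_apply, twoBlockTriangular_det _ (· ≠ i),
    det_unique (toSquareBlockProp _ fun j => ¬j ≠ i)]
  · simp only [toSquareBlockProp_def, of_apply, hdefault, updateRow_self, Pi.single_eq_same,
      mul_one]
    congr 1
    ext j k
    simp [updateRow_ne j.2]
  · intro k hk j hj
    simp_all

theorem charmatrix_submatrix {m : Type*} [Fintype m] [DecidableEq m] (M : Matrix n n R)
    {f : m → n} (hf : Function.Injective f) :
    (M.submatrix f f).charmatrix = M.charmatrix.submatrix f f := by
  ext i j
  by_cases h : i = j
  · simp [h]
  · simp [charmatrix_apply_ne _ _ _ h, charmatrix_apply_ne _ _ _ (hf.ne h)]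

theorem adjugate_charmatrix_apply_self (M : Matrix n n R) (i : n) :
    M.charmatrix.adjugate i i =
      (M.submatrix (↑) (↑) : Matrix {j // j ≠ i} {j // j ≠ i} R).charpoly := by
  rw [adjugate_apply_self, charpoly, charmatrix_submatrix _ Subtype.val_injective]

theorem adjugate_fromBlocks_zero_zero [IsDomain R] {m : Type*} [Fintype m] [DecidableEq m]
    {A : Matrix n n R} {B : Matrix m m R} (hA : A.det ≠ 0) (hB : B.det ≠ 0) :
    (fromBlocks A 0 0 B).adjugate = fromBlocks (B.det • A.adjugate) 0 0 (A.det • B.adjugate) := by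
  have hdet : (fromBlocks A 0 0 B).det = A.det * B.det := det_fromBlocks_zero₂₁ _ _ _
  have hreg : IsLeftRegular (fromBlocks A 0 0 B) := (isRegular_of_isLeftRegular_det
    (IsRegular.of_ne_zero' (hdet ▸ mul_ne_zero hA hB)).left).left
  apply hreg
  dsimp only
  rw [mul_adjugate, hdet, fromBlocks_multiply]
  simp only [Matrix.mul_zero, Matrix.zero_mul, add_zero, zero_add, Matrix.mul_smul,
    mul_adjugate, smul_smul, ← fromBlocks_one, fromBlocks_smul, smul_zero, mul_comm]

end Matrix

theorem SimpleGraph.ncard_neighborSet_eq_sum {V : Type*} [Fintype V] (G : SimpleGraph V) (x : V) :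
    (G.neighborSet x).ncard = ∑ y, if G.Adj x y then 1 else 0 := by
  rw [Finset.sum_boole, Set.ncard_eq_toFinset_card']
  congr
  ext
  simp

section joinByEdge

variable {V₁ V₂ : Type*} (G₁ : SimpleGraph V₁) (G₂ : SimpleGraph V₂) (u : V₁) (v : V₂)

@[simp]
theorem joinByEdge_adj_inl_inl {a b : V₁} :
    (joinByEdge G₁ G₂ u v).Adj (.inl a) (.inl b) ↔ G₁.Adj a b := by
  simp only [joinByEdge, fromRel_adj, ne_eq, Sum.inl.injEq]
  exact ⟨fun h => h.2.elim id (·.symm), fun h => ⟨h.ne, .inl h⟩⟩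

@[simp]
theorem joinByEdge_adj_inr_inr {a b : V₂} :
    (joinByEdge G₁ G₂ u v).Adj (.inr a) (.inr b) ↔ G₂.Adj a b := by
  simp only [joinByEdge, fromRel_adj, ne_eq, Sum.inr.injEq]
  exact ⟨fun h => h.2.elim id (·.symm), fun h => ⟨h.ne, .inl h⟩⟩

@[simp]
theorem joinByEdge_adj_inl_inr {a : V₁} {b : V₂} :
    (joinByEdge G₁ G₂ u v).Adj (.inl a) (.inr b) ↔ a = u ∧ b = v := by
  simp [joinByEdge]

@[simp]
theorem joinByEdge_adj_inr_inl {a : V₂} {b : V₁} :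
    (joinByEdge G₁ G₂ u v).Adj (.inr a) (.inl b) ↔ a = v ∧ b = u := by
  simp [joinByEdge, and_comm]

variable [Fintype V₁] [Fintype V₂]

theorem joinByEdge_ncard_neighborSet_inl (a : V₁) :
    ((joinByEdge G₁ G₂ u v).neighborSet (.inl a)).ncard =
      (G₁.neighborSet a).ncard + if a = u then 1 else 0 := by
  simp only [ncard_neighborSet_eq_sum, Fintype.sum_sum_type, joinByEdge_adj_inl_inl,
    joinByEdge_adj_inl_inr, ite_and, Finset.sum_ite_irrel, Finset.sum_ite_eq', Finset.mem_univ,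
    if_true, Finset.sum_const_zero]

theorem joinByEdge_ncard_neighborSet_inr (b : V₂) :
    ((joinByEdge G₁ G₂ u v).neighborSet (.inr b)).ncard =
      (G₂.neighborSet b).ncard + if b = v then 1 else 0 := by
  simp only [ncard_neighborSet_eq_sum, Fintype.sum_sum_type, joinByEdge_adj_inr_inr,
    joinByEdge_adj_inr_inl, ite_and, Finset.sum_ite_irrel, Finset.sum_ite_eq', Finset.mem_univ,
    if_true, Finset.sum_const_zero, add_comm]

theorem sLap_joinByEdge [DecidableEq V₁] [DecidableEq V₂] :
    sLap (joinByEdge G₁ G₂ u v) = fromBlocks (sLap G₁) 0 0 (sLap G₂) +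
      vecMulVec (Pi.single (.inl u) 1 + Pi.single (.inr v) 1)
        (Pi.single (.inl u) 1 + Pi.single (.inr v) 1) := by
  ext (a | a) (b | b) <;>
    simp [sLap, joinByEdge_ncard_neighborSet_inl, joinByEdge_ncard_neighborSet_inr, vecMulVec,
      Pi.single_apply] <;>
    split_ifs <;> simp_all

end joinByEdge

theorem QPoly_joinByEdge {V₁ V₂ : Type} [Fintype V₁] [Fintype V₂]
    [DecidableEq V₁] [DecidableEq V₂]
    (G₁ : SimpleGraph V₁) (G₂ : SimpleGraph V₂) (u : V₁) (v : V₂) :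
    QPoly (joinByEdge G₁ G₂ u v) =
      QPoly G₁ * QPoly G₂ - QPoly G₁ * QPolyDel G₂ v - QPoly G₂ * QPolyDel G₁ u := by
  have hcharmatrix : (fromBlocks (sLap G₁) 0 0 (sLap G₂)).charmatrix =
      fromBlocks (sLap G₁).charmatrix 0 0 (sLap G₂).charmatrix := by
    simp [charmatrix_fromBlocks]
  have hC : C ∘ (Pi.single (.inl u) 1 + Pi.single (.inr v) 1 : V₁ ⊕ V₂ → ℝ) =
      Pi.single (.inl u) 1 + Pi.single (.inr v) 1 := by
    ext x : 1
    simp [Pi.single_apply]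
  rw [QPoly, sLap_joinByEdge, charpoly_add_vecMulVec, charpoly_fromBlocks_zero₁₂, hcharmatrix,
    adjugate_fromBlocks_zero_zero (sLap G₁).charpoly_monic.ne_zero
      (sLap G₂).charpoly_monic.ne_zero, hC]
  simp only [dotProduct_add, add_dotProduct, mulVec_add, single_one_dotProduct,
    mulVec_single_one, col_apply, Matrix.smul_apply, smul_eq_mul, fromBlocks_apply₁₁,
    fromBlocks_apply₁₂, fromBlocks_apply₂₁, fromBlocks_apply₂₂, Matrix.zero_apply, add_zero,
    zero_add, adjugate_charmatrix_apply_self]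
  unfold QPoly QPolyDel charpoly
  ring
end

section
/- Let H be a connected finite simple graph with |V(H)| ≥ 2, let v be a vertex of H, let k ≥ 0, and let G be the graph on n = |V(H)| + 2k vertices obtained from H by attaching k pendent paths of length 2 at v (i.e., for each of k new pairs of vertices a_j, b_j, adding the edges v a_j and a_j b_j). Then Q_G(x) = (x²−3x+1)^k Q_H(x) − k x (x−2) (x²−3x+1)^{k−1} Q_{H|v}(x). -/
open Polynomial SimpleGraph Matrix

open scoped Classical

/-- The graph obtained from `H` by attaching `k` pendent paths of length 2 at `v`:
for each `j : Fin k`, the vertex `(j, 0)` is joined to `v` and to `(j, 1)`. -/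
def addPaths2 {V : Type*} (H : SimpleGraph V) (v : V) (k : ℕ) :
    SimpleGraph (V ⊕ Fin k × Fin 2) :=
  SimpleGraph.fromRel fun x y =>
    match x, y with
    | Sum.inl a, Sum.inl b => H.Adj a b
    | Sum.inl a, Sum.inr c => a = v ∧ c.2 = 0
    | Sum.inr c, Sum.inr d => c.1 = d.1 ∧ c.2 = 0 ∧ d.2 = 1
    | _, _ => False


/-! Order the vertices as `V` followed by the path vertices. Then `xI - Q(G)` is a block matrix
whose lower right block is `k` copies of the `2 × 2` block `xI - [[2, 1], [1, 1]]`, of determinant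
`x² - 3x + 1`, and whose off-diagonal blocks only meet the row and column of `v`. Wherever
`x² - 3x + 1 ≠ 0` the Schur complement is `xI - Q(H) - (k x (x - 2) / (x² - 3x + 1)) E_vv`, and
expanding its determinant along row `v` gives the identity at `x`; two polynomials that agree at
all but finitely many points are equal. -/

open scoped Kronecker

section addPaths2

variable {V : Type*} (H : SimpleGraph V) (v : V) (k : ℕ)

@[simp]
lemma addPaths2_adj_inl_inl {a b : V} :
    (addPaths2 H v k).Adj (.inl a) (.inl b) ↔ H.Adj a b := by
  simp only [addPaths2, fromRel_adj, ne_eq, Sum.inl.injEq]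
  exact ⟨fun ⟨_, h⟩ => h.elim id (·.symm), fun h => ⟨h.ne, .inl h⟩⟩

@[simp]
lemma addPaths2_adj_inl_inr {a : V} {c : Fin k × Fin 2} :
    (addPaths2 H v k).Adj (.inl a) (.inr c) ↔ a = v ∧ c.2 = 0 := by
  simp [addPaths2]

@[simp]
lemma addPaths2_adj_inr_inl {a : V} {c : Fin k × Fin 2} :
    (addPaths2 H v k).Adj (.inr c) (.inl a) ↔ a = v ∧ c.2 = 0 := by
  rw [adj_comm, addPaths2_adj_inl_inr]

@[simp]
lemma addPaths2_adj_inr_inr {c d : Fin k × Fin 2} :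
    (addPaths2 H v k).Adj (.inr c) (.inr d) ↔ c.1 = d.1 ∧ c.2 ≠ d.2 := by
  obtain ⟨i, s⟩ := c
  obtain ⟨j, t⟩ := d
  simp only [addPaths2, fromRel_adj, ne_eq, Sum.inr.injEq, Prod.mk.injEq]
  fin_cases s <;> fin_cases t <;> simp [eq_comm]

lemma ncard_neighborSet_addPaths2_inl [Finite V] (a : V) :
    ((addPaths2 H v k).neighborSet (.inl a)).ncard =
      (H.neighborSet a).ncard + if a = v then k else 0 := by
  have hset : (addPaths2 H v k).neighborSet (.inl a) =
      Sum.inl '' H.neighborSet a ∪ Sum.inr '' {c | a = v ∧ c.2 = 0} := by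
    ext (b | c) <;> simp
  have hpaths : {c : Fin k × Fin 2 | a = v ∧ c.2 = 0}.ncard = if a = v then k else 0 := by
    split_ifs with hav
    · rw [show {c : Fin k × Fin 2 | a = v ∧ c.2 = 0} = Set.univ ×ˢ {0} by ext; simp [hav],
        Set.ncard_prod]
      simp
    · simp [hav]
  rw [hset, Set.ncard_union_eq Set.disjoint_image_inl_image_inr,
    Set.ncard_image_of_injective _ Sum.inl_injective,
    Set.ncard_image_of_injective _ Sum.inr_injective, hpaths]

lemma ncard_neighborSet_addPaths2_inr_zero (j : Fin k) :
    ((addPaths2 H v k).neighborSet (.inr (j, 0))).ncard = 2 := by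
  have : (addPaths2 H v k).neighborSet (.inr (j, 0)) = {.inl v, .inr (j, 1)} := by
    ext (b | ⟨i, t⟩)
    · simp [eq_comm]
    · fin_cases t <;> simp [eq_comm]
  rw [this, Set.ncard_pair (by simp)]

lemma ncard_neighborSet_addPaths2_inr_one (j : Fin k) :
    ((addPaths2 H v k).neighborSet (.inr (j, 1))).ncard = 1 := by
  have : (addPaths2 H v k).neighborSet (.inr (j, 1)) = {.inr (j, 0)} := by
    ext (b | ⟨i, t⟩)
    · simp
    · fin_cases t <;> simp [eq_comm]
  rw [this, Set.ncard_singleton]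

end addPaths2

namespace Matrix

variable {V R : Type*} [Fintype V] [DecidableEq V] [CommRing R]

lemma det_updateRow_single_self (M : Matrix V V R) (v : V) :
    (M.updateRow v (Pi.single v 1)).det = (M.submatrix ((↑) : {x // x ≠ v} → V) (↑)).det := by
  let : Unique {x // ¬x ≠ v} := ⟨⟨v, not_not.mpr rfl⟩, fun x => Subtype.ext (not_not.mp x.2)⟩
  have hcompl : (toSquareBlockProp (M.updateRow v (Pi.single v 1)) (¬· ≠ v)).det = 1 := by
    rw [det_unique]
    show M.updateRow v (Pi.single v 1) v v = 1
    simp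
  have hminor : toSquareBlockProp (M.updateRow v (Pi.single v 1)) (· ≠ v) =
      M.submatrix (↑) (↑) := by
    ext i j
    simp [toSquareBlockProp_def, updateRow_ne i.2]
  rw [twoBlockTriangular_det _ (· ≠ v) fun i hi j hj => by
    simp [not_not.mp hi, updateRow_self, hj], hcompl, hminor, mul_one]

lemma det_sub_smul_single_self (M : Matrix V V R) (v : V) (c : R) :
    (M - c • single v v 1).det =
      M.det - c * (M.submatrix ((↑) : {x // x ≠ v} → V) (↑)).det := by
  have : M - c • single v v 1 = M.updateRow v (M v + (-c) • Pi.single v 1) := by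
    ext a b
    rcases eq_or_ne a v with rfl | hav
    · rcases eq_or_ne b a with rfl | hba <;> simp [sub_eq_add_neg, Ne.symm, *]
    · simp [hav, Ne.symm hav]
  rw [this, det_updateRow_add, updateRow_eq_self, det_updateRow_smul, det_updateRow_single_self,
    neg_mul, sub_eq_add_neg]

end Matrix

lemma Polynomial.eq_of_eval_eq_of_eval_ne_zero {R : Type*} [CommRing R] [IsDomain R] [Infinite R]
    {p q r : R[X]} (hr : r ≠ 0) (h : ∀ x, r.eval x ≠ 0 → p.eval x = q.eval x) : p = q :=
  eq_of_infinite_eval_eq p q <| (finite_setOfPred_isRoot hr).infinite_compl.mono fun x hx => h x hx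

section SignlessLaplacian

open Matrix

def pendentIncidence {V : Type*} [DecidableEq V] (v : V) (k : ℕ) : Matrix V (Fin k × Fin 2) ℝ :=
  of fun a c => if a = v ∧ c.2 = 0 then 1 else 0

/-- The block of `Q(G)` on a pendent path `a b`; the degree `2` of `a` counts its edge to `v`. -/
def pendentPathSLap : Matrix (Fin 2) (Fin 2) ℝ := !![2, 1; 1, 1]

lemma pendentIncidence_mul_kronecker_mul_transpose {V : Type*} [DecidableEq V] (v : V) (k : ℕ)
    (M : Matrix (Fin 2) (Fin 2) ℝ) :
    pendentIncidence v k * ((1 : Matrix (Fin k) (Fin k) ℝ) ⊗ₖ M) * (pendentIncidence v k)ᵀ =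
      ((k : ℝ) * M 0 0) • single v v 1 := by
  ext a b
  simp [pendentIncidence, mul_apply, one_apply, Fintype.sum_prod_type, single_apply]
  simp only [@eq_comm _ v]
  by_cases ha : a = v <;> simp [ha]

lemma det_scalar_sub_pendentPathSLap (x : ℝ) :
    (scalar (Fin 2) x - pendentPathSLap).det = x ^ 2 - 3 * x + 1 := by
  simp [pendentPathSLap, det_fin_two]
  ring

lemma inv_scalar_sub_pendentPathSLap_zero_zero (x : ℝ) :
    (scalar (Fin 2) x - pendentPathSLap)⁻¹ 0 0 = (x - 1) / (x ^ 2 - 3 * x + 1) := by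
  rw [inv_def, det_scalar_sub_pendentPathSLap, adjugate_fin_two]
  simp [pendentPathSLap, Ring.inverse_eq_inv', div_eq_inv_mul]

variable {V : Type*} [Fintype V] [DecidableEq V]

lemma eval_QPoly (G : SimpleGraph V) (x : ℝ) : (QPoly G).eval x = (scalar V x - sLap G).det :=
  eval_charpoly _ _

lemma eval_QPolyDel (G : SimpleGraph V) (v : V) (x : ℝ) :
    (QPolyDel G v).eval x =
      ((scalar V x - sLap G).submatrix ((↑) : {a // a ≠ v} → V) (↑)).det := by
  rw [QPolyDel, eval_charpoly]
  congr
  ext a b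
  simp [diagonal_apply, Subtype.ext_iff]

lemma sLap_addPaths2 (H : SimpleGraph V) (v : V) (k : ℕ) :
    sLap (addPaths2 H v k) =
      fromBlocks (sLap H + (k : ℝ) • single v v 1) (pendentIncidence v k)
        (pendentIncidence v k)ᵀ (1 ⊗ₖ pendentPathSLap) := by
  ext (a | ⟨i, s⟩) (b | ⟨j, t⟩)
  · by_cases hab : a = b
    · subst hab
      by_cases hav : a = v
      · simp [sLap, ncard_neighborSet_addPaths2_inl, hav]
      · simp [sLap, ncard_neighborSet_addPaths2_inl, hav, Ne.symm hav]
    · by_cases hav : a = v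
      · subst hav
        simp [sLap, hab]
      · simp [sLap, hab, Ne.symm hav]
  · simp [sLap, pendentIncidence]
  · simp [sLap, pendentIncidence]
  · fin_cases s <;> fin_cases t <;> by_cases hij : i = j <;>
      simp [sLap, pendentPathSLap, one_apply, hij, ncard_neighborSet_addPaths2_inr_zero,
        ncard_neighborSet_addPaths2_inr_one]

lemma scalar_sub_sLap_addPaths2 (H : SimpleGraph V) (v : V) (k : ℕ) (x : ℝ) :
    scalar _ x - sLap (addPaths2 H v k) =
      fromBlocks (scalar V x - sLap H - (k : ℝ) • single v v 1) (-pendentIncidence v k)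
        (-(pendentIncidence v k)ᵀ) (1 ⊗ₖ (scalar (Fin 2) x - pendentPathSLap)) := by
  rw [sLap_addPaths2]
  ext (a | ⟨i, s⟩) (b | ⟨j, t⟩)
  · simp [sub_sub, diagonal_apply]
  · simp
  · simp
  · by_cases hij : i = j <;> by_cases hst : s = t <;> simp [one_apply, hij, hst]

lemma det_scalar_sub_sLap_addPaths2 (H : SimpleGraph V) (v : V) (k : ℕ) {x : ℝ}
    (hx : x ^ 2 - 3 * x + 1 ≠ 0) :
    (scalar _ x - sLap (addPaths2 H v k)).det =
      (x ^ 2 - 3 * x + 1) ^ k *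
        (scalar V x - sLap H - (k * x * (x - 2) / (x ^ 2 - 3 * x + 1)) • single v v 1).det := by
  set D := (1 : Matrix (Fin k) (Fin k) ℝ) ⊗ₖ (scalar (Fin 2) x - pendentPathSLap)
  have hdetD : D.det = (x ^ 2 - 3 * x + 1) ^ k := by
    rw [det_kronecker, det_one, one_pow, one_mul, det_scalar_sub_pendentPathSLap,
      Fintype.card_fin]
  let : Invertible D := invertibleOfIsUnitDet _ (hdetD ▸ (pow_ne_zero k hx).isUnit)
  have hschur : -pendentIncidence v k * ⅟D * -(pendentIncidence v k)ᵀ =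
      ((k : ℝ) * ((x - 1) / (x ^ 2 - 3 * x + 1))) • single v v 1 := by
    simp only [D, invOf_eq_nonsing_inv, inv_kronecker, inv_one, Matrix.neg_mul, Matrix.mul_neg,
      neg_neg]
    rw [pendentIncidence_mul_kronecker_mul_transpose, inv_scalar_sub_pendentPathSLap_zero_zero]
  rw [scalar_sub_sLap_addPaths2, det_fromBlocks₂₂, hdetD, hschur, sub_sub, ← add_smul]
  congr 4
  linear_combination (-(k : ℝ)) * mul_inv_cancel₀ hx

lemma eval_QPoly_addPaths2 (H : SimpleGraph V) (v : V) (k : ℕ) {x : ℝ}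
    (hx : x ^ 2 - 3 * x + 1 ≠ 0) :
    (QPoly (addPaths2 H v k)).eval x =
      (x ^ 2 - 3 * x + 1) ^ k * (QPoly H).eval x -
        k * x * (x - 2) * (x ^ 2 - 3 * x + 1) ^ (k - 1) * (QPolyDel H v).eval x := by
  rw [eval_QPoly, det_scalar_sub_sLap_addPaths2 H v k hx, det_sub_smul_single_self,
    ← eval_QPoly, ← eval_QPolyDel]
  rcases k with _ | n
  · simp
  · rw [Nat.add_sub_cancel, pow_succ]
    linear_combination
      (-((n + 1 : ℕ) * x * (x - 2) * (x ^ 2 - 3 * x + 1) ^ n * (QPolyDel H v).eval x)) *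
        mul_inv_cancel₀ hx

end SignlessLaplacian

theorem QPoly_addPaths2_general {V : Type} [Fintype V] [DecidableEq V]
    (H : SimpleGraph V) (v : V) (k : ℕ) :
    QPoly (addPaths2 H v k) =
      (X ^ 2 - 3 * X + 1) ^ k * QPoly H -
        (k : Polynomial ℝ) * X * (X - 2) * (X ^ 2 - 3 * X + 1) ^ (k - 1) * QPolyDel H v := by
  have hq : (X ^ 2 - 3 * X + 1 : ℝ[X]) ≠ 0 := fun h => by simpa using congrArg (eval 0) h
  refine eq_of_eval_eq_of_eval_ne_zero hq fun x hx => ?_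
  simp [eval_QPoly_addPaths2 H v k (by simpa using hx)]

theorem QPoly_addPaths2 {V : Type} [Fintype V] [DecidableEq V]
    (H : SimpleGraph V) (hH : H.Connected) (hV : 2 ≤ Fintype.card V) (v : V) (k : ℕ) :
    QPoly (addPaths2 H v k) =
      (X ^ 2 - 3 * X + 1) ^ k * QPoly H -
        (k : Polynomial ℝ) * X * (X - 2) * (X ^ 2 - 3 * X + 1) ^ (k - 1) * QPolyDel H v :=
  QPoly_addPaths2_general H v k
end
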